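/- arXiv:2003.07164 — 3 statements merged into one kernel-verified Lean document; each statement's English description precedes it below -/
import Mathlib

section
/- Let p be a prime with p > 3, let ω = exp(2πi/p), and let H and V_S be the p×p complex matrices (indexed by ZMod p) defined by H e_k = p^{-1/2} · Σ_{j∈ZMod p} ω^{jk} e_j and V_S e_k = ω^{2^{-1}·k²} e_k, where 2^{-1} denotes the inverse of 2 in ZMod p. Then there is no nonzero vector v ∈ ℂ^p that is simultaneously an eigenvector of H and of V_S; i.e., there do not exist nonzero v and scalars λ, μ ∈ ℂ with H v = λ v and V_S v = μ v. -/
/-!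
An eigenvector `v` of the diagonal gate `V_S` lives on a single level set of `k ↦ 2⁻¹ k²`, i.e.
on `{k, -k}`. Since `p > 3` there is a row `j ∉ {0, k, -k}` of the eigenvalue equation for `H`
whose right-hand side vanishes. If `k = 0` that row reads `v 0 = 0`. Otherwise the row `0`
gives `v (-k) = -v k`, and then row `j` gives `(ω^{jk} - ω^{-jk}) v k = 0`, forcing `2jk = 0`.
-/

open scoped BigOperators
open Complex Matrix

noncomputable def omg (p : ℕ) : ℂ := Complex.exp (2 * Real.pi * Complex.I / p)

noncomputable def Hmat (p : ℕ) : Matrix (ZMod p) (ZMod p) ℂ :=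
  Matrix.of fun j k => (Real.sqrt p : ℂ)⁻¹ * omg p ^ ((j * k : ZMod p).val)

noncomputable def VS (p : ℕ) : Matrix (ZMod p) (ZMod p) ℂ :=
  Matrix.diagonal fun k => omg p ^ (((2 : ZMod p)⁻¹ * k ^ 2).val)

def Xmat (p : ℕ) : Matrix (ZMod p) (ZMod p) ℂ :=
  Matrix.of fun j k => if j = k + 1 then 1 else 0

noncomputable def Zmat (p : ℕ) : Matrix (ZMod p) (ZMod p) ℂ :=
  Matrix.diagonal fun k => omg p ^ (k.val)

noncomputable def Dmat (p : ℕ) [NeZero p] (u v : ZMod p) : Matrix (ZMod p) (ZMod p) ℂ :=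
  omg p ^ (((2 : ZMod p)⁻¹ * u * v).val) • (Xmat p ^ u.val * Zmat p ^ v.val)

noncomputable def A0 (p : ℕ) [NeZero p] : Matrix (ZMod p) (ZMod p) ℂ :=
  (p : ℂ)⁻¹ • ∑ u : ZMod p, ∑ v : ZMod p, Dmat p u v

noncomputable def Amat (p : ℕ) [NeZero p] (χ : ZMod p × ZMod p) : Matrix (ZMod p) (ZMod p) ℂ :=
  Dmat p χ.1 χ.2 * A0 p * (Dmat p χ.1 χ.2)ᴴ

noncomputable def W (p : ℕ) [NeZero p] (χ : ZMod p × ZMod p) (v : ZMod p → ℂ) : ℂ :=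
  (p : ℂ)⁻¹ * (star v ⬝ᵥ (Amat p χ).mulVec v)

def Pmat (p : ℕ) : Matrix (ZMod p) (ZMod p) ℂ :=
  Matrix.of fun j k => if j = -k then 1 else 0

section
variable {p : ℕ}

lemma isPrimitiveRoot_omg [NeZero p] : IsPrimitiveRoot (omg p) p :=
  Complex.isPrimitiveRoot_exp p (NeZero.ne p)

lemma omg_pow_val_injective [NeZero p] : Function.Injective fun x : ZMod p => omg p ^ x.val :=
  fun x y h => ZMod.val_injective p (isPrimitiveRoot_omg.pow_inj x.val_lt y.val_lt h)

lemma VS_mulVec_apply [NeZero p] (v : ZMod p → ℂ) (j : ZMod p) :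
    (VS p *ᵥ v) j = omg p ^ ((2 : ZMod p)⁻¹ * j ^ 2).val * v j := by
  simp [VS, mulVec_diagonal]

lemma Hmat_mulVec_apply [NeZero p] (v : ZMod p → ℂ) (j : ZMod p) :
    (Hmat p *ᵥ v) j = (Real.sqrt p : ℂ)⁻¹ * ∑ m, omg p ^ (j * m).val * v m := by
  simp [Hmat, mulVec, dotProduct, Finset.mul_sum, mul_assoc]

lemma ZMod.two_ne_zero_of_ne_two [Fact p.Prime] (hp : p ≠ 2) : (2 : ZMod p) ≠ 0 :=
  Ring.two_ne_zero (by rwa [ZMod.ringChar_zmod_n])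

lemma apply_eq_zero_of_VS_mulVec_eq_smul [Fact p.Prime] (hp : p ≠ 2) {v : ZMod p → ℂ} {μ : ℂ}
    (hv : VS p *ᵥ v = μ • v) {k : ZMod p} (hk : v k ≠ 0) {j : ZMod p} (hjk : j ≠ k)
    (hjk' : j ≠ -k) : v j = 0 := by
  by_contra hj
  have hμ : ∀ i, v i ≠ 0 → omg p ^ ((2 : ZMod p)⁻¹ * i ^ 2).val = μ := fun i hi =>
    mul_right_cancel₀ hi (by rw [← VS_mulVec_apply, hv, Pi.smul_apply, smul_eq_mul])
  have hsq : j ^ 2 = k ^ 2 := mul_left_cancel₀ (inv_ne_zero (ZMod.two_ne_zero_of_ne_two hp))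
    (omg_pow_val_injective ((hμ j hj).trans (hμ k hk).symm))
  rcases (Commute.all j k).sq_eq_sq_iff_eq_or_eq_neg.1 hsq with h | h
  exacts [hjk h, hjk' h]

lemma sum_omg_pow_mul_eq_zero_of_Hmat_mulVec_eq_smul [NeZero p] {v : ZMod p → ℂ} {lam : ℂ}
    (hv : Hmat p *ᵥ v = lam • v) {j : ZMod p} (hj : v j = 0) :
    ∑ m, omg p ^ (j * m).val * v m = 0 := by
  have hsqrt : (Real.sqrt p : ℂ) ≠ 0 := by
    exact_mod_cast (Real.sqrt_pos.2 (by exact_mod_cast NeZero.pos p)).ne'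
  have := congrFun hv j
  rw [Hmat_mulVec_apply, Pi.smul_apply, hj, smul_zero] at this
  exact (mul_eq_zero.1 this).resolve_left (inv_ne_zero hsqrt)

lemma omg_pow_val_mul_ne_mul_neg [Fact p.Prime] (hp : p ≠ 2) {j k : ZMod p} (hj : j ≠ 0)
    (hk : k ≠ 0) : omg p ^ (j * k).val ≠ omg p ^ (j * -k).val := by
  intro h
  have h2jk : 2 * j * k = 0 := by linear_combination omg_pow_val_injective h
  simp [ZMod.two_ne_zero_of_ne_two hp, hj, hk] at h2jk

lemma apply_eq_zero_of_sum_omg_pow_mul_eq_zero [Fact p.Prime] (hp : p ≠ 2) {v : ZMod p → ℂ}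
    {k : ZMod p} (hk : k ≠ 0) (hsupp : ∀ m, m ≠ k → m ≠ -k → v m = 0) {j : ZMod p} (hj : j ≠ 0)
    (hrow0 : ∑ m, omg p ^ (0 * m).val * v m = 0) (hrowj : ∑ m, omg p ^ (j * m).val * v m = 0) :
    v k = 0 := by
  have hpair : ∀ i, ∑ m, omg p ^ (i * m).val * v m =
      omg p ^ (i * k).val * v k + omg p ^ (i * -k).val * v (-k) := fun i =>
    Fintype.sum_eq_add k (-k) (ZMod.ne_neg_self ((Fact.out : p.Prime).odd_of_ne_two hp) hk)
      fun m hm => by rw [hsupp m hm.1 hm.2, mul_zero]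
  rw [hpair] at hrow0 hrowj
  simp only [zero_mul, ZMod.val_zero, pow_zero, one_mul] at hrow0
  have hdiff : (omg p ^ (j * k).val - omg p ^ (j * -k).val) * v k = 0 := by
    linear_combination hrowj - omg p ^ (j * -k).val * hrow0
  exact (mul_eq_zero.1 hdiff).resolve_left (sub_ne_zero.2 (omg_pow_val_mul_ne_mul_neg hp hj hk))

end

theorem no_simultaneous_eigenvector_of_H_and_VS (p : ℕ) [Fact p.Prime] (hp : 3 < p) :
    ¬ ∃ (v : ZMod p → ℂ) (lam mu : ℂ), v ≠ 0 ∧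
        (Hmat p).mulVec v = lam • v ∧ (VS p).mulVec v = mu • v := by
  rintro ⟨v, lam, mu, hv, hH, hVS⟩
  have hp2 : p ≠ 2 := by omega
  obtain ⟨k, hk⟩ : ∃ k, v k ≠ 0 := Function.ne_iff.1 hv
  have hsupp : ∀ m, m ≠ k → m ≠ -k → v m = 0 := fun _ =>
    apply_eq_zero_of_VS_mulVec_eq_smul hp2 hVS hk
  have hrow : ∀ i, i ≠ k → i ≠ -k → ∑ m, omg p ^ (i * m).val * v m = 0 := fun i hik hik' =>
    sum_omg_pow_mul_eq_zero_of_Hmat_mulVec_eq_smul hH (hsupp i hik hik')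
  obtain ⟨j, -, hj⟩ : ∃ j ∈ Finset.univ, j ∉ ({0, k, -k} : Finset (ZMod p)) :=
    Finset.exists_mem_notMem_of_card_lt_card
      (Finset.card_le_three.trans_lt (by rwa [Finset.card_univ, ZMod.card]))
  simp only [Finset.mem_insert, Finset.mem_singleton, not_or] at hj
  obtain ⟨hj0, hjk, hjk'⟩ := hj
  by_cases hk0 : k = 0
  · subst hk0
    have hrowj := hrow j hjk hjk'
    rw [Fintype.sum_eq_single 0 fun m hm => by rw [hsupp m hm (by simpa using hm), mul_zero]]
      at hrowj
    exact hk (by simpa using hrowj)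
  · exact hk (apply_eq_zero_of_sum_omg_pow_mul_eq_zero hp2 hk0 hsupp hj0
      (hrow 0 (Ne.symm hk0) (by simpa [eq_comm] using hk0)) (hrow j hjk hjk'))
end

section
/- Let p be an odd prime, ω = exp(2πi/p), and define on ℂ^p (indexed by ZMod p) the shift X e_n = e_{n+1}, the clock Z e_n = ω^n e_n, and the Heisenberg–Weyl displacement operators D_{(u,v)} = ω^{u·v·2^{-1}} X^u Z^v for u,v ∈ ZMod p, where 2^{-1} is the inverse of 2 in ZMod p. Then the phase point operator at the origin, A_{(0,0)} = (1/p) Σ_{u,v ∈ ZMod p} D_{(u,v)}, equals the parity operator P defined by P e_k = e_{−k}. -/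
open scoped BigOperators
open Complex Matrix

/-!
Writing `ψ = ZMod.stdAddChar`, so that `ω ^ a.val = ψ a`, the `(j, k)` entry of `D_{(u,v)}` is
`ψ (v * 2⁻¹ * (j + k))` when `u = j - k` and `0` otherwise. Summing over `u` leaves a single
term, and the sum over `v` is the orthogonality relation of the primitive character `ψ`:
it equals `p` when `2⁻¹ * (j + k) = 0`, i.e. when `j = -k`, and vanishes otherwise.
-/

lemma two_mul_inv_two_of_odd {p : ℕ} (hodd : Odd p) : (2 : ZMod p) * 2⁻¹ = 1 :=
  ZMod.mul_inv_of_unit _ <| by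
    exact_mod_cast (ZMod.isUnit_iff_coprime 2 p).mpr (Nat.coprime_two_left.mpr hodd)

section

variable {p : ℕ} [NeZero p]

lemma omg_pow_val (a : ZMod p) : omg p ^ a.val = ZMod.stdAddChar a := by
  rw [ZMod.stdAddChar_apply, ZMod.toCircle_apply, omg, ← Complex.exp_nat_mul]
  ring_nf

lemma Xmat_pow_apply (n : ℕ) (j k : ZMod p) :
    (Xmat p ^ n) j k = if j = k + n then 1 else 0 := by
  induction n generalizing j with
  | zero => simp [Matrix.one_apply, eq_comm]
  | succ n ih =>
    rw [pow_succ', Matrix.mul_apply, Finset.sum_eq_single (j - 1)]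
    · rw [ih, Xmat, Matrix.of_apply, if_pos (sub_add_cancel j 1).symm, one_mul]
      simp only [sub_eq_iff_eq_add, Nat.cast_succ, add_assoc]
    · intro i _ hi
      rw [Xmat, Matrix.of_apply, if_neg (fun h => hi (by rw [h]; ring)), zero_mul]
    · exact fun h => absurd (Finset.mem_univ _) h

lemma Zmat_pow_val (v : ZMod p) :
    Zmat p ^ v.val = Matrix.diagonal fun k => ZMod.stdAddChar (k * v) := by
  rw [Zmat, Matrix.diagonal_pow]
  congr 1
  ext k
  rw [Pi.pow_apply, omg_pow_val, ← AddChar.map_nsmul_eq_pow, nsmul_eq_mul, ZMod.natCast_zmod_val,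
    mul_comm]

lemma Dmat_apply (hodd : Odd p) (u v j k : ZMod p) :
    Dmat p u v j k = if u = j - k then ZMod.stdAddChar (v * (2⁻¹ * (j + k))) else 0 := by
  rw [Dmat, Matrix.smul_apply, Zmat_pow_val, Matrix.mul_diagonal, Xmat_pow_apply,
    ZMod.natCast_zmod_val, omg_pow_val, smul_eq_mul]
  by_cases hu : u = j - k
  · subst hu
    rw [if_pos (by ring), if_pos rfl, one_mul, ← AddChar.map_add_eq_mul]
    congr 1
    linear_combination -(k * v) * two_mul_inv_two_of_odd hodd
  · rw [if_neg (fun h => hu (by rw [h]; ring)), if_neg hu, zero_mul, mul_zero]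

lemma sum_sum_Dmat_apply (hodd : Odd p) (j k : ZMod p) :
    ∑ u : ZMod p, ∑ v : ZMod p, Dmat p u v j k = if j = -k then (p : ℂ) else 0 := by
  have h_half : (2⁻¹ * (j + k) = 0) ↔ j = -k := by
    rw [(IsUnit.of_mul_eq_one_right 2 (two_mul_inv_two_of_odd hodd)).mul_right_eq_zero,
      add_eq_zero_iff_eq_neg]
  simp only [Dmat_apply hodd]
  rw [Finset.sum_comm]
  simp only [Finset.sum_ite_eq', Finset.mem_univ, if_true]
  rw [AddChar.sum_mulShift _ (ZMod.isPrimitive_stdAddChar p), ZMod.card]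
  simp only [h_half, Nat.cast_ite, Nat.cast_zero]

end

theorem phase_point_operator_at_origin_eq_parity (p : ℕ) [Fact p.Prime] (hodd : Odd p) :
    A0 p = Pmat p := by
  ext j k
  have hp : (p : ℂ) ≠ 0 := Nat.cast_ne_zero.mpr (NeZero.ne p)
  simp only [A0, Matrix.smul_apply, Matrix.sum_apply, sum_sum_Dmat_apply hodd, Pmat,
    Matrix.of_apply, smul_eq_mul]
  split_ifs
  · exact inv_mul_cancel₀ hp
  · exact mul_zero _
end

section
/- Let ω = exp(2πi/3), P the parity operator on ℂ³ given by P e_k = e_{−k} (indices in ZMod 3), and for a unit vector v ∈ ℂ³ let W_{(0,0)}(v) = (1/3)·⟨v, P v⟩ (the value of the discrete Wigner function at the origin, since A_{(0,0)} = P). Then W_{(0,0)}(v) ≥ −1/3 for every unit vector v, and equality W_{(0,0)}(v) = −1/3 holds if and only if v is a scalar multiple of the strange state (e_1 − e_2)/√2. -/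
open scoped BigOperators
open Complex Matrix

open scoped ComplexOrder

/-- The qutrit strange state `S = (e₁ - e₂)/√2`. -/
noncomputable def strangeState : ZMod 3 → ℂ :=
  (Real.sqrt 2 : ℂ)⁻¹ • ((Pi.single 1 1 : ZMod 3 → ℂ) - (Pi.single 2 1 : ZMod 3 → ℂ))

/-! The parity operator is a Hermitian involution, so `‖v + P v‖² = 2 (⟨v, v⟩ + ⟨v, P v⟩)`.
Hence `⟨v, P v⟩ ≥ -‖v‖²`, with equality exactly when `P v = -v`. On `ℂ³` the `(-1)`-eigenspace of
`P e_k = e_{-k}` is cut out by `v 0 = 0` and `v 2 = -v 1`, i.e. it is the line through `e₁ - e₂`. -/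

namespace Matrix

variable {n R : Type*} [Fintype n] [DecidableEq n]

theorem star_add_mulVec_dotProduct_of_involutive [CommRing R] [StarRing R] {A : Matrix n n R}
    (hA : A.IsHermitian) (hA2 : A * A = 1) (v : n → R) :
    star (v + A *ᵥ v) ⬝ᵥ (v + A *ᵥ v) = 2 * (star v ⬝ᵥ v + star v ⬝ᵥ A *ᵥ v) := by
  have hAv : star (A *ᵥ v) = star v ᵥ* A := by rw [star_mulVec, hA.eq]
  have hsq : star v ᵥ* A ⬝ᵥ A *ᵥ v = star v ⬝ᵥ v := by
    rw [← dotProduct_mulVec, mulVec_mulVec, hA2, one_mulVec]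
  rw [star_add, hAv, add_dotProduct, dotProduct_add, dotProduct_add, hsq,
    ← dotProduct_mulVec]
  ring

variable {𝕜 : Type*} [RCLike 𝕜] {A : Matrix n n 𝕜}

theorem neg_dotProduct_star_self_le_of_involutive (hA : A.IsHermitian) (hA2 : A * A = 1)
    (v : n → 𝕜) : -(star v ⬝ᵥ v) ≤ star v ⬝ᵥ A *ᵥ v := by
  have h := star_add_mulVec_dotProduct_of_involutive hA hA2 v ▸ dotProduct_star_self_nonneg _
  rw [neg_le_iff_add_nonneg']
  simpa using mul_nonneg (inv_nonneg.2 zero_le_two) h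

theorem dotProduct_mulVec_eq_neg_iff_of_involutive (hA : A.IsHermitian) (hA2 : A * A = 1)
    (v : n → 𝕜) : star v ⬝ᵥ A *ᵥ v = -(star v ⬝ᵥ v) ↔ A *ᵥ v = -v := by
  rw [eq_neg_iff_add_eq_zero, eq_neg_iff_add_eq_zero, add_comm (A *ᵥ v), add_comm,
    ← dotProduct_star_self_eq_zero, star_add_mulVec_dotProduct_of_involutive hA hA2,
    mul_eq_zero, or_iff_right two_ne_zero]

end Matrix

theorem Pmat_isHermitian (p : ℕ) : (Pmat p).IsHermitian := by
  ext j k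
  simp only [conjTranspose_apply, Pmat, of_apply]
  split_ifs <;> simp_all

theorem Pmat_mul_self (p : ℕ) [NeZero p] : Pmat p * Pmat p = 1 := by
  ext j k
  simp [Pmat, mul_apply, one_apply]

theorem Pmat_mulVec (p : ℕ) [NeZero p] (v : ZMod p → ℂ) : Pmat p *ᵥ v = fun j => v (-j) := by
  ext j
  simp only [Pmat, mulVec, dotProduct, of_apply, ite_mul, one_mul, zero_mul]
  simp_rw [← neg_eq_iff_eq_neg, Finset.sum_ite_eq, Finset.mem_univ, if_true]

theorem ZMod.three_cases (j : ZMod 3) : j = 0 ∨ j = 1 ∨ j = 2 := by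
  revert j; decide

theorem strangeState_zero : strangeState 0 = 0 := by
  simp [strangeState, show (0 : ZMod 3) ≠ 2 by decide]

theorem strangeState_one : strangeState 1 = (Real.sqrt 2 : ℂ)⁻¹ := by
  simp [strangeState, show (1 : ZMod 3) ≠ 2 by decide]

theorem strangeState_two : strangeState 2 = -(Real.sqrt 2 : ℂ)⁻¹ := by
  simp [strangeState, show (2 : ZMod 3) ≠ 1 by decide]

theorem exists_eq_smul_strangeState_iff (v : ZMod 3 → ℂ) :
    (∃ c : ℂ, v = c • strangeState) ↔ ∀ j, v (-j) = -v j := by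
  constructor
  · rintro ⟨c, rfl⟩ j
    have hneg1 : (-1 : ZMod 3) = 2 := rfl
    have hneg2 : (-2 : ZMod 3) = 1 := rfl
    rcases ZMod.three_cases j with rfl | rfl | rfl <;>
      simp [hneg1, hneg2, strangeState_zero, strangeState_one, strangeState_two]
  · intro hv
    have h0 : v 0 = 0 := CharZero.eq_neg_self_iff.mp (neg_zero (G := ZMod 3) ▸ hv 0)
    have h2 : v 2 = -v 1 := hv 1
    refine ⟨Real.sqrt 2 * v 1, funext fun j => ?_⟩
    rcases ZMod.three_cases j with rfl | rfl | rfl <;>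
      simp [strangeState_zero, strangeState_one, strangeState_two, h0, h2] <;> field_simp

theorem wigner_origin_min (v : ZMod 3 → ℂ) (hv : star v ⬝ᵥ v = 1) :
    -(1 / 3 : ℂ) ≤ (1 / 3 : ℂ) * (star v ⬝ᵥ (Pmat 3).mulVec v) ∧
    ((1 / 3 : ℂ) * (star v ⬝ᵥ (Pmat 3).mulVec v) = -(1 / 3) ↔
      ∃ c : ℂ, v = c • strangeState) := by
  have hle := neg_dotProduct_star_self_le_of_involutive (Pmat_isHermitian 3) (Pmat_mul_self 3) v
  have heq := dotProduct_mulVec_eq_neg_iff_of_involutive (Pmat_isHermitian 3) (Pmat_mul_self 3) v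
  rw [hv] at hle heq
  have hodd : Pmat 3 *ᵥ v = -v ↔ ∀ j, v (-j) = -v j := by
    rw [Pmat_mulVec, funext_iff]
    rfl
  rw [exists_eq_smul_strangeState_iff, ← hodd, ← heq,
    show -(1 / 3 : ℂ) = 1 / 3 * -1 by ring, mul_right_inj' (by norm_num)]
  exact ⟨mul_le_mul_of_nonneg_left hle (one_div_nonneg.2 zero_le_three), Iff.rfl⟩
end
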